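/- Assume D = 0 and Re(λ_i) < 0 for all i = 1,…,n (the system is asymptotically stable and strictly proper). Then ‖H‖²_{H2,ω} tends, as the real number ω tends to +∞, to tr( Σ_{i=1}^n φ_i · H(−λ_i)ᵀ ), i.e. the squared frequency-limited H2-norm converges to the squared H2-norm of the system. -/

import Mathlib

/-!
Expanding `H(iν) H(-iν)ᵀ` turns the integrand into a combination of the scalar functions
`(iν - a)⁻¹ (-iν - b)⁻¹` with `a = λᵢ`, `b = λⱼ`. By partial fractions each of these is
`(-a - b)⁻¹ ((iν - a)⁻¹ + (-iν - b)⁻¹)`, and `-i log (iν - a)` is an antiderivative of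
`(iν - a)⁻¹` on the whole real line because `iν - a` stays in the right half-plane. Since
`log (iω - a) - log (-iω - a) → log i - log (-i) = πi`, both integrals over `[-ω, ω]` tend to `π`,
so the normalised integral tends to `(-a - b)⁻¹`, which is the `(i, j)` entry of the H2 formula.
-/

open Complex Matrix MeasureTheory intervalIntegral BigOperators

/-- Strictly proper transfer function `H(s) = Σᵢ (s − λᵢ)⁻¹ • φᵢ`. -/
noncomputable def transferH {n n_u n_y : ℕ} (lam : Fin n → ℂ)
    (φ : Fin n → Matrix (Fin n_y) (Fin n_u) ℂ) (s : ℂ) : Matrix (Fin n_y) (Fin n_u) ℂ :=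
  ∑ i, (s - lam i)⁻¹ • φ i

/-- Squared frequency-limited H2-norm:
`‖H‖²_{H2,ω} = (1/(2π)) ∫_{−ω}^{ω} tr(H(iν)·H(−iν)ᵀ) dν`. -/
noncomputable def h2wSq {n n_u n_y : ℕ} (lam : Fin n → ℂ)
    (φ : Fin n → Matrix (Fin n_y) (Fin n_u) ℂ) (ω : ℝ) : ℂ :=
  (2 * (Real.pi : ℂ))⁻¹ * ∫ ν : ℝ in (-ω)..ω,
    (transferH lam φ (Complex.I * (ν : ℂ)) *
      (transferH lam φ (-(Complex.I * (ν : ℂ))))ᵀ).trace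

open Filter Topology
open scoped Real

section Scalar

variable {a b : ℂ}

lemma I_mul_ofReal_sub_mem_slitPlane (ha : a.re < 0) (ν : ℝ) : I * ν - a ∈ slitPlane :=
  mem_slitPlane_iff.2 <| Or.inl <| by simpa using ha

lemma I_mul_ofReal_sub_ne_zero (ha : a.re < 0) (ν : ℝ) : I * ν - a ≠ 0 :=
  slitPlane_ne_zero (I_mul_ofReal_sub_mem_slitPlane ha ν)

lemma neg_I_mul_ofReal_sub_ne_zero (hb : b.re < 0) (ν : ℝ) : -(I * ν) - b ≠ 0 := by
  simpa using I_mul_ofReal_sub_ne_zero hb (-ν)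

lemma continuous_inv_I_mul_ofReal_sub (ha : a.re < 0) :
    Continuous fun ν : ℝ => (I * ν - a)⁻¹ :=
  (by fun_prop : Continuous fun ν : ℝ => I * ν - a).inv₀ (I_mul_ofReal_sub_ne_zero ha)

lemma continuous_inv_neg_I_mul_ofReal_sub (hb : b.re < 0) :
    Continuous fun ν : ℝ => (-(I * ν) - b)⁻¹ :=
  (by fun_prop : Continuous fun ν : ℝ => -(I * ν) - b).inv₀ (neg_I_mul_ofReal_sub_ne_zero hb)

lemma hasDerivAt_neg_I_mul_log_I_mul_ofReal_sub (ha : a.re < 0) (ν : ℝ) :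
    HasDerivAt (fun ν : ℝ => -I * log (I * ν - a)) (I * ν - a)⁻¹ ν := by
  have hlin : HasDerivAt (fun ν : ℝ => I * ν - a) I ν := by
    simpa using ((ofRealCLM.hasDerivAt (x := ν)).const_mul I).sub_const a
  have h := ((hasDerivAt_log (I_mul_ofReal_sub_mem_slitPlane ha ν)).comp ν hlin).const_mul (-I)
  rwa [show -I * ((I * ν - a)⁻¹ * I) = (I * ν - a)⁻¹ by
    linear_combination -(I * (ν : ℂ) - a)⁻¹ * I_mul_I] at h

lemma integral_inv_I_mul_ofReal_sub (ha : a.re < 0) (ω : ℝ) :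
    ∫ ν in (-ω)..ω, (I * ν - a)⁻¹ = -I * (log (I * ω - a) - log (-(I * ω) - a)) := by
  rw [integral_eq_sub_of_hasDerivAt (fun ν _ => hasDerivAt_neg_I_mul_log_I_mul_ofReal_sub ha ν)
    ((continuous_inv_I_mul_ofReal_sub ha).intervalIntegrable _ _)]
  push_cast
  ring_nf

lemma tendsto_log_I_mul_sub_sub_log_neg_I_mul_sub (a : ℂ) :
    Tendsto (fun ω : ℝ => log (I * ω - a) - log (-(I * ω) - a)) atTop (𝓝 (π * I)) := by
  have hinv : Tendsto (fun ω : ℝ => ((ω⁻¹ : ℝ) : ℂ)) atTop (𝓝 0) := by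
    simpa using tendsto_inv_atTop_zero.ofReal
  have hu : Tendsto (fun ω : ℝ => I - a * (ω⁻¹ : ℝ)) atTop (𝓝 I) := by
    simpa using tendsto_const_nhds.sub (hinv.const_mul a)
  have hv : Tendsto (fun ω : ℝ => -I - a * (ω⁻¹ : ℝ)) atTop (𝓝 (-I)) := by
    simpa using tendsto_const_nhds.sub (hinv.const_mul a)
  have hlim := ((continuousAt_clog (by simp [mem_slitPlane_iff])).tendsto.comp hu).sub
    ((continuousAt_clog (by simp [mem_slitPlane_iff])).tendsto.comp hv)
  rw [log_I, log_neg_I, show (π : ℂ) / 2 * I - -(π / 2) * I = π * I by ring] at hlim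
  refine hlim.congr' ?_
  filter_upwards [eventually_gt_atTop 0, hu.eventually_ne I_ne_zero,
    hv.eventually_ne (neg_ne_zero.2 I_ne_zero)] with ω hω hu0 hv0
  -- factor out `ω > 0`, whose logarithm is real and cancels
  have hω' : (ω : ℂ) ≠ 0 := ofReal_ne_zero.2 hω.ne'
  rw [show I * ω - a = ω * (I - a * (ω⁻¹ : ℝ)) by push_cast; field_simp,
    show -(I * ω) - a = ω * (-I - a * (ω⁻¹ : ℝ)) by push_cast; field_simp,
    log_ofReal_mul hω hu0, log_ofReal_mul hω hv0]
  simp only [Function.comp_apply]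
  ring

lemma tendsto_integral_inv_I_mul_ofReal_sub (ha : a.re < 0) :
    Tendsto (fun ω : ℝ => ∫ ν in (-ω)..ω, (I * ν - a)⁻¹) atTop (𝓝 π) := by
  have h := (tendsto_log_I_mul_sub_sub_log_neg_I_mul_sub a).const_mul (-I)
  rw [show -I * (π * I) = π by linear_combination -π * I_mul_I] at h
  simpa only [integral_inv_I_mul_ofReal_sub ha] using h

lemma tendsto_integral_inv_neg_I_mul_ofReal_sub (hb : b.re < 0) :
    Tendsto (fun ω : ℝ => ∫ ν in (-ω)..ω, (-(I * ν) - b)⁻¹) atTop (𝓝 π) := by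
  refine (tendsto_integral_inv_I_mul_ofReal_sub hb).congr fun ω => ?_
  simpa using (integral_comp_neg (a := -ω) (b := ω) fun ν : ℝ => (I * ν - b)⁻¹).symm

lemma tendsto_integral_inv_mul_inv (ha : a.re < 0) (hb : b.re < 0) :
    Tendsto (fun ω : ℝ => (2 * π : ℂ)⁻¹ * ∫ ν in (-ω)..ω, (I * ν - a)⁻¹ * (-(I * ν) - b)⁻¹)
      atTop (𝓝 (-a - b)⁻¹) := by
  have hab : -a - b ≠ 0 := fun h => by
    have := congrArg re h
    simp only [sub_re, neg_re, zero_re] at this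
    linarith
  have hpartial : ∀ ν : ℝ, (I * ν - a)⁻¹ * (-(I * ν) - b)⁻¹
      = (-a - b)⁻¹ * ((I * ν - a)⁻¹ + (-(I * ν) - b)⁻¹) := fun ν => by
    have hx := I_mul_ofReal_sub_ne_zero ha ν
    have hy := neg_I_mul_ofReal_sub_ne_zero hb ν
    field_simp
    ring
  simp_rw [hpartial, intervalIntegral.integral_const_mul]
  simp_rw [integral_add ((continuous_inv_I_mul_ofReal_sub ha).intervalIntegrable _ _)
    ((continuous_inv_neg_I_mul_ofReal_sub hb).intervalIntegrable _ _)]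
  convert ((tendsto_integral_inv_I_mul_ofReal_sub ha).add
    (tendsto_integral_inv_neg_I_mul_ofReal_sub hb)).const_mul (-a - b)⁻¹ |>.const_mul
      (2 * π : ℂ)⁻¹ using 2
  field_simp
  ring

end Scalar

section Transfer

variable {n n_u n_y : ℕ} {lam : Fin n → ℂ} {φ : Fin n → Matrix (Fin n_y) (Fin n_u) ℂ}

lemma trace_sum_mul_transferH_neg_transpose :
    (∑ i, φ i * (transferH lam φ (-lam i))ᵀ).trace
      = ∑ i, ∑ j, (-lam i - lam j)⁻¹ * (φ i * (φ j)ᵀ).trace := by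
  simp only [transferH, transpose_sum, transpose_smul, Matrix.mul_sum, Matrix.mul_smul, trace_sum,
    trace_smul, smul_eq_mul]

lemma trace_transferH_mul_transpose (s t : ℂ) :
    (transferH lam φ s * (transferH lam φ t)ᵀ).trace
      = ∑ i, ∑ j, (s - lam i)⁻¹ * (t - lam j)⁻¹ * (φ i * (φ j)ᵀ).trace := by
  simp only [transferH, transpose_sum, transpose_smul, Matrix.sum_mul, Matrix.mul_sum,
    Matrix.smul_mul, Matrix.mul_smul, trace_sum, trace_smul, smul_eq_mul, Finset.mul_sum]
  rw [Finset.sum_comm]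
  exact Finset.sum_congr rfl fun i _ => Finset.sum_congr rfl fun j _ => by ring

lemma h2wSq_eq_sum (hstable : ∀ i, (lam i).re < 0) (ω : ℝ) :
    h2wSq lam φ ω = ∑ i, ∑ j, ((2 * π : ℂ)⁻¹ *
      ∫ ν in (-ω)..ω, (I * ν - lam i)⁻¹ * (-(I * ν) - lam j)⁻¹) * (φ i * (φ j)ᵀ).trace := by
  have hcont : ∀ i j, Continuous fun ν : ℝ =>
      (I * ν - lam i)⁻¹ * (-(I * ν) - lam j)⁻¹ * (φ i * (φ j)ᵀ).trace := fun i j =>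
    ((continuous_inv_I_mul_ofReal_sub (hstable i)).mul
      (continuous_inv_neg_I_mul_ofReal_sub (hstable j))).mul continuous_const
  simp only [h2wSq, trace_transferH_mul_transpose]
  rw [integral_finsetSum fun i _ =>
    (continuous_finsetSum _ fun j _ => hcont i j).intervalIntegrable _ _, Finset.mul_sum]
  refine Finset.sum_congr rfl fun i _ => ?_
  rw [integral_finsetSum fun j _ => (hcont i j).intervalIntegrable _ _, Finset.mul_sum]
  exact Finset.sum_congr rfl fun j _ => by rw [intervalIntegral.integral_mul_const, mul_assoc]

end Transfer

open Filter Topology in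
theorem stmt_3_general (n n_u n_y : ℕ)
    (lam : Fin n → ℂ)
    (φ : Fin n → Matrix (Fin n_y) (Fin n_u) ℂ)
    (hstable : ∀ i, (lam i).re < 0) :
    Tendsto (fun ω : ℝ => h2wSq lam φ ω) atTop
      (nhds ((∑ i, φ i * (transferH lam φ (-lam i))ᵀ).trace)) := by
  simp_rw [h2wSq_eq_sum hstable, trace_sum_mul_transferH_neg_transpose]
  exact tendsto_finsetSum _ fun i _ => tendsto_finsetSum _ fun j _ =>
    (tendsto_integral_inv_mul_inv (hstable i) (hstable j)).mul_const _

open Filter Topology in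
theorem stmt_3 (n n_u n_y : ℕ) (hn : 0 < n) (hnu : 0 < n_u) (hny : 0 < n_y)
    (lam : Fin n → ℂ) (hdist : Function.Injective lam)
    (φ : Fin n → Matrix (Fin n_y) (Fin n_u) ℂ)
    (hstable : ∀ i, (lam i).re < 0) :
    Tendsto (fun ω : ℝ => h2wSq lam φ ω) atTop
      (nhds ((∑ i, φ i * (transferH lam φ (-lam i))ᵀ).trace)) :=
  stmt_3_general n n_u n_y lam φ hstable
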